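/- arXiv:2511.05793 — 7 statements merged into one kernel-verified Lean document; each statement's English description precedes it below -/
import Mathlib

section
/- (MFCQ implies Abadie CQ.) Let Y = {y ∈ ℝ^q : h_i(y) = 0 for all i ∈ I, g_j(y) ≤ 0 for all j ∈ J} with h_i, g_j of class C¹ and I, J finite, and let y ∈ Y. If {∇h_i(y) : i ∈ I} is linearly independent and there exists ν ∈ ℝ^q with ⟨∇h_i(y), ν⟩ = 0 for all i ∈ I and ⟨∇g_j(y), ν⟩ < 0 for all j ∈ 𝒜(y), then T_Y(y) = L_Y(y). -/
open Filter Topology RealInnerProductSpace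

noncomputable section

/-- The Bouligand tangent cone: directions `ν` such that there are sequences `νₖ → ν` and
`tₖ → 0⁺` with `y + tₖ • νₖ ∈ Y` for every `k`. -/
def bouligandTangentCone {E : Type*} [NormedAddCommGroup E] [InnerProductSpace ℝ E]
    (Y : Set E) (y : E) : Set E :=
  {ν | ∃ (νs : ℕ → E) (t : ℕ → ℝ),
    Tendsto νs atTop (𝓝 ν) ∧ (∀ k, 0 < t k) ∧ Tendsto t atTop (𝓝 0) ∧
    ∀ k, y + t k • νs k ∈ Y}

/-- The normal cone, the polar of the Bouligand tangent cone. -/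
def normalCone {E : Type*} [NormedAddCommGroup E] [InnerProductSpace ℝ E]
    (Y : Set E) (y : E) : Set E :=
  {η | ∀ ν ∈ bouligandTangentCone Y y, ⟪η, ν⟫ ≤ 0}

/-- The feasible set described by equality constraints `hI i = 0` and
inequality constraints `gJ j ≤ 0`. -/
def feasSet {E : Type*} [NormedAddCommGroup E] [InnerProductSpace ℝ E] {I J : Type*}
    (hI : I → E → ℝ) (gJ : J → E → ℝ) : Set E :=
  {y | (∀ i, hI i y = 0) ∧ ∀ j, gJ j y ≤ 0}

/-- The linearized tangent cone at `y`: `⟨∇hᵢ(y), ν⟩ = 0` for all `i ∈ I` and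
`⟨∇gⱼ(y), ν⟩ ≤ 0` for all active `j` (i.e. `gⱼ(y) = 0`). -/
def linearizedCone {E : Type*} [NormedAddCommGroup E] [InnerProductSpace ℝ E] [CompleteSpace E]
    {I J : Type*} (hI : I → E → ℝ) (gJ : J → E → ℝ) (y : E) : Set E :=
  {ν | (∀ i, ⟪gradient (hI i) y, ν⟫ = 0) ∧ ∀ j, gJ j y = 0 → ⟪gradient (gJ j) y, ν⟫ ≤ 0}

/-!
Every Bouligand tangent direction lies in Mathlib's positive tangent cone, on which the
first-order optimality conditions hold; since each `hᵢ` is both maximal and minimal on `Y` at `y`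
and each active `gⱼ` is maximal there, this gives `T_Y(y) ⊆ L_Y(y)`.

Conversely, let `w` satisfy `⟨∇hᵢ(y), w⟩ = 0` and `⟨∇gⱼ(y), w⟩ < 0` for active `j`. As the
`∇hᵢ(y)` are independent, the implicit function theorem yields a curve in `{h = 0}` through `y`
with velocity `w`; along it the active `gⱼ` become negative and the inactive ones stay negative,
so `w ∈ T_Y(y)`. With `d` the MFCQ direction, every `ν ∈ L_Y(y)` is the limit of such directions
`ν + s d` as `s → 0⁺`, and `T_Y(y)` is closed.
-/

open Set

section BouligandCone

variable {E : Type*} [NormedAddCommGroup E] [InnerProductSpace ℝ E] {ν : E}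

theorem bouligandTangentCone_subset_posTangentConeAt (Y : Set E) (y : E) :
    bouligandTangentCone Y y ⊆ posTangentConeAt Y y := by
  rintro ν ⟨νs, t, hνs, ht_pos, ht, hmem⟩
  refine mem_tangentConeAt_of_seq atTop (fun k => (t k)⁻¹.toNNReal) (fun k => t k • νs k)
    (by simpa using ht.smul hνs) (.of_forall hmem) (hνs.congr fun k => ?_)
  rw [NNReal.smul_def, Real.coe_toNNReal _ (inv_nonneg.mpr (ht_pos k).le),
    inv_smul_smul₀ (ht_pos k).ne']

theorem isClosed_bouligandTangentCone (Y : Set E) (y : E) :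
    IsClosed (bouligandTangentCone Y y) := by
  refine isClosed_of_closure_subset fun ν hν => ?_
  have h_approx : ∀ n : ℕ, ∃ t v, t ∈ Ioo 0 (1 / ((n : ℝ) + 1)) ∧
      dist v ν < 1 / ((n : ℝ) + 1) ∧ y + t • v ∈ Y := by
    intro n
    set ε : ℝ := 1 / ((n : ℝ) + 1)
    have hε : 0 < ε := by positivity
    obtain ⟨μ, ⟨νs, t, hνs, ht_pos, ht, hmem⟩, hνμ⟩ :=
      Metric.mem_closure_iff.mp hν (ε / 2) (half_pos hε)
    obtain ⟨k, hk_near, hk_small⟩ :=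
      ((Metric.tendsto_nhds.mp hνs) (ε / 2) (half_pos hε)).and (ht.eventually_lt_const hε)
        |>.exists
    refine ⟨t k, νs k, ⟨ht_pos k, hk_small⟩, ?_, hmem k⟩
    calc dist (νs k) ν ≤ dist (νs k) μ + dist μ ν := dist_triangle _ _ _
      _ < ε / 2 + ε / 2 := add_lt_add hk_near (by rwa [dist_comm])
      _ = ε := add_halves ε
  choose t v ht hv hmem using h_approx
  refine ⟨v, t, tendsto_iff_dist_tendsto_zero.mpr ?_, fun n => (ht n).1, ?_, hmem⟩
  · exact squeeze_zero (fun _ => dist_nonneg) (fun n => (hv n).le)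
      tendsto_one_div_add_atTop_nhds_zero_nat
  · exact squeeze_zero (fun n => (ht n).1.le) (fun n => (ht n).2.le)
      tendsto_one_div_add_atTop_nhds_zero_nat

theorem mem_bouligandTangentCone_of_tendsto {Y : Set E} {y : E} {v : ℝ → E}
    (hv : Tendsto v (𝓝[>] 0) (𝓝 ν)) (hY : ∀ᶠ t in 𝓝[>] 0, y + t • v t ∈ Y) :
    ν ∈ bouligandTangentCone Y y := by
  obtain ⟨ε, hε, hε_sub⟩ := mem_nhdsGT_iff_exists_Ioo_subset.mp hY
  obtain ⟨t, -, ht_mem, ht⟩ := exists_seq_strictAnti_tendsto' (mem_Ioi.mp hε)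
  have ht' : Tendsto t atTop (𝓝[>] 0) :=
    tendsto_nhdsWithin_iff.mpr ⟨ht, .of_forall fun k => (ht_mem k).1⟩
  exact ⟨v ∘ t, t, hv.comp ht', fun k => (ht_mem k).1, ht, fun k => hε_sub (ht_mem k)⟩

theorem mem_bouligandTangentCone_of_hasDerivAt {Y : Set E} {γ : ℝ → E} (hγ : HasDerivAt γ ν 0)
    (hY : ∀ᶠ t in 𝓝[>] 0, γ t ∈ Y) : ν ∈ bouligandTangentCone Y (γ 0) := by
  refine mem_bouligandTangentCone_of_tendsto (v := fun t => t⁻¹ • (γ t - γ 0))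
    (by simpa using hγ.tendsto_slope_zero_right) ?_
  filter_upwards [hY, self_mem_nhdsWithin] with t ht_mem ht_pos
  rwa [smul_inv_smul₀ (ne_of_gt ht_pos), add_sub_cancel]

end BouligandCone

theorem eventually_nonpos_of_hasDerivAt {φ : ℝ → ℝ} {d : ℝ} (hφ : HasDerivAt φ d 0)
    (h0 : φ 0 ≤ 0) (hd : φ 0 = 0 → d < 0) : ∀ᶠ t in 𝓝[>] 0, φ t ≤ 0 := by
  rcases h0.lt_or_eq with h_neg | h_zero
  · exact (hφ.continuousAt.eventually_lt continuousAt_const h_neg).filter_mono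
      nhdsWithin_le_nhds |>.mono fun _ => le_of_lt
  · have h_slope : ∀ᶠ t in 𝓝[>] 0, t⁻¹ • (φ (0 + t) - φ 0) < 0 :=
      hφ.tendsto_slope_zero_right.eventually_lt_const (hd h_zero)
    filter_upwards [h_slope, self_mem_nhdsWithin] with t ht_slope ht_pos
    rw [zero_add, h_zero, sub_zero, smul_eq_mul, inv_mul_lt_iff₀ ht_pos, mul_zero] at ht_slope
    exact ht_slope.le

theorem surjective_inner_of_linearIndependent {E ι : Type*} [NormedAddCommGroup E]
    [InnerProductSpace ℝ E] [Fintype ι] {G : ι → E} (hG : LinearIndependent ℝ G) :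
    Function.Surjective fun (v : E) (i : ι) => ⟪G i, v⟫ := by
  let T : E →ₗ[ℝ] ι → ℝ := LinearMap.pi fun i => (innerSL ℝ (G i) : E →ₗ[ℝ] ℝ)
  let S : (ι → ℝ) →ₗ[ℝ] E := Fintype.linearCombination ℝ G
  have hS : Function.Injective S := linearIndependent_iff_injective_fintypeLinearCombination.mp hG
  -- `T ∘ S` is an endomorphism of the finite-dimensional space `ι → ℝ`, so injectivity suffices
  have hTS : Function.Injective (T ∘ₗ S) := by
    refine (injective_iff_map_eq_zero _).mpr fun c hc => hS ?_
    have h_self : ⟪S c, S c⟫ = 0 := by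
      calc ⟪S c, S c⟫ = ∑ i, c i * T (S c) i := by
            nth_rw 1 [Fintype.linearCombination_apply]
            simp only [sum_inner, real_inner_smul_left]
            rfl
        _ = 0 := by simp [show T (S c) = 0 from hc]
    rw [inner_self_eq_zero.mp h_self, map_zero]
  have h_surj := LinearMap.injective_iff_surjective.mp hTS
  rw [LinearMap.coe_comp] at h_surj
  exact h_surj.of_comp

theorem HasStrictFDerivAt.exists_curve_tangent_mem_ker {E F : Type*} [NormedAddCommGroup E]
    [NormedSpace ℝ E] [CompleteSpace E] [NormedAddCommGroup F] [NormedSpace ℝ F]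
    [FiniteDimensional ℝ F] {f : E → F} {f' : E →L[ℝ] F} {y w : E}
    (hf : HasStrictFDerivAt f f' y) (hf' : f'.range = ⊤) (hw : w ∈ f'.ker) :
    ∃ γ : ℝ → E, γ 0 = y ∧ HasDerivAt γ w 0 ∧ ∀ᶠ t in 𝓝 0, f (γ t) = f y := by
  set φ := hf.implicitFunction f f' hf'
  set w' : f'.ker := ⟨w, hw⟩
  refine ⟨fun t => φ (f y) (t • w'), by simp [φ], ?_, ?_⟩
  · have hφ : HasFDerivAt (φ (f y)) f'.ker.subtypeL ((0 : ℝ) • w') := by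
      simpa using (hf.to_implicitFunction hf').hasFDerivAt
    simpa [Function.comp_def, w'] using
      hφ.comp_hasDerivAt (0 : ℝ) ((hasDerivAt_id (0 : ℝ)).smul_const w')
  · have h_lim : Tendsto (fun t : ℝ => (f y, t • w')) (𝓝 0) (𝓝 (f y, 0)) :=
      tendsto_const_nhds.prodMk_nhds (by simpa using (tendsto_id (x := 𝓝 (0 : ℝ))).smul_const w')
    exact h_lim.eventually (hf.map_implicitFunction_eq hf')

section Constraints

variable {E : Type*} [NormedAddCommGroup E] [InnerProductSpace ℝ E] [CompleteSpace E]
  {I J : Type*} {hI : I → E → ℝ} {gJ : J → E → ℝ} {y w : E}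

theorem posTangentConeAt_feasSet_subset_linearizedCone
    (hh : ∀ i, DifferentiableAt ℝ (hI i) y) (hg : ∀ j, DifferentiableAt ℝ (gJ j) y)
    (hy : y ∈ feasSet hI gJ) :
    posTangentConeAt (feasSet hI gJ) y ⊆ linearizedCone hI gJ y := by
  intro ν hν
  refine ⟨fun i => ?_, fun j hj => ?_⟩
  · have h_max : IsMaxOn (hI i) (feasSet hI gJ) y := fun z hz => by
      simp [hz.1 i, hy.1 i]
    have h_min : IsMinOn (hI i) (feasSet hI gJ) y := fun z hz => by
      simp [hz.1 i, hy.1 i]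
    have hD := (hh i).hasFDerivAt.hasFDerivWithinAt (s := feasSet hI gJ)
    rw [inner_gradient_left]
    exact le_antisymm (h_max.localize.hasFDerivWithinAt_nonpos hD hν)
      (h_min.localize.hasFDerivWithinAt_nonneg hD hν)
  · have h_max : IsMaxOn (gJ j) (feasSet hI gJ) y := fun z hz => by
      simpa [hj] using hz.2 j
    rw [inner_gradient_left]
    exact h_max.localize.hasFDerivWithinAt_nonpos (hg j).hasFDerivAt.hasFDerivWithinAt hν

theorem mem_bouligandTangentCone_feasSet_of_strict [Fintype I] [Finite J]
    (hh : ∀ i, ContDiffAt ℝ 1 (hI i) y) (hg : ∀ j, DifferentiableAt ℝ (gJ j) y)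
    (hy : y ∈ feasSet hI gJ) (hLI : LinearIndependent ℝ fun i => gradient (hI i) y)
    (hw_eq : ∀ i, ⟪gradient (hI i) y, w⟫ = 0)
    (hw_ineq : ∀ j, gJ j y = 0 → ⟪gradient (gJ j) y, w⟫ < 0) :
    w ∈ bouligandTangentCone (feasSet hI gJ) y := by
  set H' : E →L[ℝ] I → ℝ := ContinuousLinearMap.pi fun i => fderiv ℝ (hI i) y
  have hH : HasStrictFDerivAt (fun x i => hI i x) H' y :=
    hasStrictFDerivAt_pi'.mpr fun i => (hh i).hasStrictFDerivAt one_ne_zero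
  have hH'_apply : ⇑H' = fun v i => ⟪gradient (hI i) y, v⟫ := by
    ext v i
    exact (inner_gradient_left ..).symm
  have hH'_range : H'.range = ⊤ := by
    rw [LinearMap.range_eq_top, ContinuousLinearMap.coe_coe, hH'_apply]
    exact surjective_inner_of_linearIndependent hLI
  have hw_ker : w ∈ H'.ker := by
    rw [LinearMap.mem_ker, ContinuousLinearMap.coe_coe, hH'_apply]
    exact funext hw_eq
  obtain ⟨γ, rfl, hγ, hγ_level⟩ := hH.exists_curve_tangent_mem_ker hH'_range hw_ker
  refine mem_bouligandTangentCone_of_hasDerivAt hγ ?_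
  have h_eq : ∀ᶠ t in 𝓝[>] 0, ∀ i, hI i (γ t) = 0 := by
    refine (hγ_level.mono fun t ht i => ?_).filter_mono nhdsWithin_le_nhds
    rw [congrFun ht i, hy.1 i]
  have h_ineq (j : J) : ∀ᶠ t in 𝓝[>] 0, gJ j (γ t) ≤ 0 := by
    have hD := (hg j).hasFDerivAt.comp_hasDerivAt 0 hγ
    rw [← inner_gradient_left] at hD
    exact eventually_nonpos_of_hasDerivAt hD (hy.2 j) (hw_ineq j)
  filter_upwards [h_eq, eventually_all.mpr h_ineq] with t h_eq_t h_ineq_t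
  exact ⟨h_eq_t, h_ineq_t⟩

end Constraints

/-- MFCQ implies Abadie CQ: if the gradients of the equality constraints are linearly
independent at `y ∈ Y` and there is a direction `ν` orthogonal to all `∇hᵢ(y)` with
`⟨∇gⱼ(y), ν⟩ < 0` for every active `j`, then the Bouligand tangent cone equals the
linearized cone at `y`. -/
theorem mfcq_implies_abadie {q : ℕ} {I J : Type*} [Fintype I] [Fintype J]
    (hI : I → EuclideanSpace ℝ (Fin q) → ℝ) (gJ : J → EuclideanSpace ℝ (Fin q) → ℝ)
    (hreg : ∀ i, ContDiff ℝ 1 (hI i)) (greg : ∀ j, ContDiff ℝ 1 (gJ j))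
    (y : EuclideanSpace ℝ (Fin q)) (hy : y ∈ feasSet hI gJ)
    (hLI : LinearIndependent ℝ (fun i : I => gradient (hI i) y))
    (hdir : ∃ ν : EuclideanSpace ℝ (Fin q),
      (∀ i, ⟪gradient (hI i) y, ν⟫ = 0) ∧ ∀ j, gJ j y = 0 → ⟪gradient (gJ j) y, ν⟫ < 0) :
    bouligandTangentCone (feasSet hI gJ) y = linearizedCone hI gJ y := by
  have hh_diff : ∀ i, DifferentiableAt ℝ (hI i) y := fun i => (hreg i).differentiable one_ne_zero y
  have hg_diff : ∀ j, DifferentiableAt ℝ (gJ j) y := fun j => (greg j).differentiable one_ne_zero y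
  refine ((bouligandTangentCone_subset_posTangentConeAt _ y).trans
    (posTangentConeAt_feasSet_subset_linearizedCone hh_diff hg_diff hy)).antisymm ?_
  rintro ν ⟨hν_eq, hν_ineq⟩
  obtain ⟨d, hd_eq, hd_ineq⟩ := hdir
  refine (isClosed_bouligandTangentCone _ y).mem_of_tendsto (b := 𝓝[>] (0 : ℝ))
    (f := fun s => ν + s • d) ?_ ?_
  · have h_lim := (tendsto_id (x := 𝓝[>] (0 : ℝ))).mono_right nhdsWithin_le_nhds
    simpa using tendsto_const_nhds (x := ν) |>.add (h_lim.smul_const d)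
  · filter_upwards [self_mem_nhdsWithin] with s (hs : 0 < s)
    refine mem_bouligandTangentCone_feasSet_of_strict (fun i => (hreg i).contDiffAt) hg_diff hy
      hLI (fun i => ?_) (fun j hj => ?_)
    · rw [inner_add_right, inner_smul_right, hν_eq i, hd_eq i, mul_zero, add_zero]
    · rw [inner_add_right, inner_smul_right]
      nlinarith [hν_ineq j hj, hd_ineq j hj]
end
end

section
/- (Existence of a valid big-M bound.) Let A_l ∈ ℝ^{k×p}, b_l ∈ ℝ^k, A_f ∈ ℝ^{m×p}, B_f ∈ ℝ^{m×q}, b_f ∈ ℝ^m, c_f ∈ ℝ^q. There exists M > 0 such that for every pair (x,y) with A_l x ≤ b_l and y an optimal solution of the linear program minimize c_fᵀ y subject to A_f x + B_f y ≤ b_f, there exists μ ∈ ℝ^m with 0 ≤ μ and μ_i ≤ M for all i ∈ [m], satisfying −B_fᵀ μ = c_f and μ_i (A_f x + B_f y − b_f)_i = 0 for all i ∈ [m]. -/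
/-!
At an optimal lower-level point `y`, no direction `v` that keeps the active constraints
(those with `(A_f x + B_f y)ᵢ = (b_f)ᵢ`) satisfied can decrease `c_fᵀ y`. By Farkas' lemma,
`-c_f` is then a nonnegative combination of the active rows of `B_f`, i.e. there is a KKT
multiplier supported on the active set. Whether such a multiplier exists depends only on the
active set, and there are finitely many active sets: fixing one multiplier for each of them and
taking `M` above all their entries gives the bound.

Farkas' lemma follows from hyperplane separation once finitely generated cones are known to be
closed; by Carathéodory's theorem for cones, such a cone is a finite union of images of closed
orthants under injective linear maps.
-/

open Finset Filter Topology Matrix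

section Caratheodory

variable {𝕜 ι V : Type*} [Field 𝕜] [LinearOrder 𝕜] [IsStrictOrderedRing 𝕜]
  [AddCommGroup V] [Module 𝕜 V] [Fintype ι] [DecidableEq ι]

lemma exists_erase_nonneg_sum_smul_eq_of_not_linearIndepOn {w : ι → V} {s : Finset ι}
    {μ : ι → 𝕜} (hμ : 0 ≤ μ) (hμs : ∀ i ∉ s, μ i = 0) (hs : ¬LinearIndepOn 𝕜 w (s : Set ι)) :
    ∃ j ∈ s, ∃ ν : ι → 𝕜, 0 ≤ ν ∧ (∀ i ∉ s.erase j, ν i = 0) ∧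
      ∑ i, ν i • w i = ∑ i, μ i • w i := by
  obtain ⟨g, hg, j, hj, hgj⟩ := not_linearIndepOn_finset_iff.mp hs
  obtain ⟨l, hl, hls, hlpos⟩ : ∃ l : ι → 𝕜, ∑ i, l i • w i = 0 ∧ (∀ i ∉ s, l i = 0) ∧
      ∃ i, 0 < l i := by
    have hsum : ∑ i, (if i ∈ s then g i else 0) • w i = 0 := by
      simpa only [ite_smul, zero_smul, sum_ite_mem, univ_inter] using hg
    rcases hgj.lt_or_gt with hneg | hpos
    · refine ⟨fun i => -(if i ∈ s then g i else 0), ?_, fun i hi => by simp [hi], j,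
        by simpa [hj]⟩
      simp only [neg_smul, sum_neg_distrib, hsum, neg_zero]
    · exact ⟨fun i => if i ∈ s then g i else 0, hsum, fun i hi => by simp [hi], j, by simpa [hj]⟩
  -- `t` is the longest step along `-l` that keeps `μ - t • l` nonnegative.
  obtain ⟨j, hjpos, hjmin⟩ := (univ.filter (0 < l ·)).exists_min_image (fun i => μ i / l i)
    (by simpa [Finset.Nonempty] using hlpos)
  simp only [mem_filter, mem_univ, true_and] at hjpos hjmin
  set t := μ j / l j
  have ht : 0 ≤ t := div_nonneg (hμ j) hjpos.le
  have hjs : j ∈ s := by_contra fun h => hjpos.ne' (hls j h)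
  refine ⟨j, hjs, μ - t • l, fun i => ?_, fun i hi => ?_, ?_⟩
  · have hμi := hμ i
    simp only [Pi.zero_apply, Pi.sub_apply, Pi.smul_apply, smul_eq_mul] at hμi ⊢
    rcases lt_or_ge 0 (l i) with hli | hli
    · linarith [(le_div_iff₀ hli).mp (hjmin i hli)]
    · nlinarith
  · rcases eq_or_ne i j with rfl | hij
    · simp [t, div_mul_cancel₀ _ hjpos.ne']
    · have his : i ∉ s := fun h => hi (mem_erase.mpr ⟨hij, h⟩)
      simp [hμs i his, hls i his]
  · simp only [Pi.sub_apply, Pi.smul_apply, sub_smul, smul_eq_mul, mul_smul, sum_sub_distrib,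
      ← smul_sum, hl, smul_zero, sub_zero]

lemma exists_linearIndepOn_nonneg_sum_smul_eq (w : ι → V) (s : Finset ι) {μ : ι → 𝕜}
    (hμ : 0 ≤ μ) (hμs : ∀ i ∉ s, μ i = 0) :
    ∃ t ⊆ s, LinearIndepOn 𝕜 w (t : Set ι) ∧ ∃ ν : ι → 𝕜, 0 ≤ ν ∧ (∀ i ∉ t, ν i = 0) ∧
      ∑ i, ν i • w i = ∑ i, μ i • w i := by
  induction s using Finset.strongInduction generalizing μ with
  | H s ih =>
    by_cases hs : LinearIndepOn 𝕜 w (s : Set ι)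
    · exact ⟨s, subset_rfl, hs, μ, hμ, hμs, rfl⟩
    obtain ⟨j, hj, ν, hν, hνs, hνμ⟩ :=
      exists_erase_nonneg_sum_smul_eq_of_not_linearIndepOn hμ hμs hs
    obtain ⟨t, hts, ht, ν', hν', hν't, hν'ν⟩ := ih _ (erase_ssubset hj) hν hνs
    exact ⟨t, hts.trans (erase_subset j s), ht, ν', hν', hν't, hν'ν.trans hνμ⟩

end Caratheodory

lemma Fintype.sum_eq_sum_subtype_of_forall_notMem {ι M : Type*} [Fintype ι] [AddCommMonoid M]
    {s : Finset ι} {f : ι → M} (hf : ∀ i ∉ s, f i = 0) : ∑ i, f i = ∑ i : s, f i :=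
  (Finset.sum_subset (subset_univ s) fun i _ hi => hf i hi).symm.trans (sum_coe_sort s f).symm

section Farkas

variable {ι V : Type*} [Fintype ι] [NormedAddCommGroup V] [NormedSpace ℝ V]

lemma isClosed_linearCombination_image_nonneg (w : ι → V) :
    IsClosed (Fintype.linearCombination ℝ w '' Set.Ici 0) := by
  classical
  have hunion : Fintype.linearCombination ℝ w '' Set.Ici 0 =
      ⋃ t ∈ {t : Finset ι | LinearIndepOn ℝ w (t : Set ι)},
        Fintype.linearCombination ℝ (fun i : t => w i) '' Set.Ici 0 := by
    ext x
    simp only [Set.mem_image, Set.mem_Ici, Set.mem_iUnion, Set.mem_ofPred_eq, exists_prop,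
      Fintype.linearCombination_apply]
    constructor
    · rintro ⟨μ, hμ, rfl⟩
      obtain ⟨t, -, ht, ν, hν, hνt, hνμ⟩ :=
        exists_linearIndepOn_nonneg_sum_smul_eq w univ hμ (by simp)
      refine ⟨t, ht, fun i => ν i, fun i => hν i, ?_⟩
      rw [← hνμ, Fintype.sum_eq_sum_subtype_of_forall_notMem (s := t) (by simp +contextual [hνt])]
    · rintro ⟨t, -, ν, hν, rfl⟩
      refine ⟨fun i => if h : i ∈ t then ν ⟨i, h⟩ else 0, fun i => ?_, ?_⟩
      · by_cases h : i ∈ t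
        · simpa [h] using hν ⟨i, h⟩
        · simp [h]
      · rw [Fintype.sum_eq_sum_subtype_of_forall_notMem (s := t) (by simp +contextual)]
        simp
  rw [hunion]
  refine (Set.toFinite _).isClosed_biUnion fun t ht => ?_
  have hinj : LinearMap.ker (Fintype.linearCombination ℝ (fun i : t => w i)) = ⊥ :=
    LinearMap.ker_eq_bot.mpr (LinearIndependent.fintypeLinearCombination_injective ht)
  exact (LinearMap.isClosedEmbedding_of_injective hinj).isClosedMap _ isClosed_Ici

lemma exists_nonneg_sum_smul_eq_of_forall_nonneg (w : ι → V) (t : V)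
    (h : ∀ f : StrongDual ℝ V, (∀ i, 0 ≤ f (w i)) → 0 ≤ f t) :
    ∃ μ : ι → ℝ, 0 ≤ μ ∧ ∑ i, μ i • w i = t := by
  classical
  let C : ProperCone ℝ V :=
    { toSubmodule := (PointedCone.positive ℝ (ι → ℝ)).map (Fintype.linearCombination ℝ w)
      isClosed' := by simpa using isClosed_linearCombination_image_nonneg w }
  by_contra ht
  obtain ⟨f, hfC, hft⟩ := C.hyperplane_separation_point (x₀ := t)
    (by simpa [C, Fintype.linearCombination_apply] using ht)
  refine (h f fun i => hfC _ ?_).not_gt hft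
  exact PointedCone.mem_map.mpr ⟨Pi.single i 1, by simp [PointedCone.mem_positive], by simp⟩

end Farkas

namespace Matrix

variable {m n : Type*} [Fintype m] [Fintype n]

lemma exists_multiplier_of_forall_mulVec_nonpos {B : Matrix m n ℝ} {c : n → ℝ} (s : Set m)
    (h : ∀ v, (∀ i ∈ s, (B *ᵥ v) i ≤ 0) → 0 ≤ c ⬝ᵥ v) :
    ∃ μ : m → ℝ, 0 ≤ μ ∧ (∀ i ∉ s, μ i = 0) ∧ -(Bᵀ *ᵥ μ) = c := by
  classical
  obtain ⟨μ, hμ, hμc⟩ := exists_nonneg_sum_smul_eq_of_forall_nonneg (s.indicator fun i => -B i) c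
    fun f hf => by
      have hdot : ∀ u, f u = u ⬝ᵥ fun j => f (Pi.single j 1) := fun u => by
        conv_lhs => rw [pi_eq_sum_univ' u]
        simp [dotProduct]
      rw [hdot]
      refine h _ fun i hi => ?_
      have := hf i
      rw [Set.indicator_of_mem hi, map_neg, hdot] at this
      simpa [mulVec, dotProduct_comm] using this
  refine ⟨s.indicator μ, fun i => Set.indicator_nonneg (fun i _ => hμ i) i,
    fun i hi => Set.indicator_of_notMem hi μ, ?_⟩
  rw [mulVec_transpose, vecMul_eq_sum, ← hμc, ← sum_neg_distrib]
  refine sum_congr rfl fun i _ => ?_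
  by_cases hi : i ∈ s <;> simp [hi]

lemma dotProduct_nonneg_of_feasible_direction {B : Matrix m n ℝ} {a b : m → ℝ} {c y : n → ℝ}
    (hy : a + B *ᵥ y ≤ b) (hopt : ∀ y', a + B *ᵥ y' ≤ b → c ⬝ᵥ y ≤ c ⬝ᵥ y') (v : n → ℝ)
    (hv : ∀ i, (a + B *ᵥ y) i = b i → (B *ᵥ v) i ≤ 0) : 0 ≤ c ⬝ᵥ v := by
  have hfeas : ∀ᶠ ε in 𝓝[>] (0 : ℝ), a + B *ᵥ (y + ε • v) ≤ b := by
    simp only [Pi.le_def, eventually_all, mulVec_add, mulVec_smul, ← add_assoc]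
    intro i
    rcases (hy i).eq_or_lt with hact | hinact
    · filter_upwards [self_mem_nhdsWithin] with ε hε
      have := mul_nonpos_of_nonneg_of_nonpos (le_of_lt hε) (hv i hact)
      simp only [Pi.add_apply, Pi.smul_apply, smul_eq_mul] at hact ⊢
      linarith
    · have hcont : Continuous fun ε : ℝ => (a + B *ᵥ y + ε • B *ᵥ v) i := by fun_prop
      exact nhdsWithin_le_nhds <| ((hcont.tendsto' 0 _ (by simp)).eventually_lt_const hinact).mono
        fun _ h => h.le
  obtain ⟨ε, hεfeas, hε⟩ := (hfeas.and self_mem_nhdsWithin).exists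
  have := hopt _ hεfeas
  rw [dotProduct_add, dotProduct_smul, smul_eq_mul, le_add_iff_nonneg_right] at this
  exact nonneg_of_mul_nonneg_right this hε

end Matrix

lemma Finite.exists_pos_forall_exists_mem_le {α ι : Type*} [Finite α] [Finite ι]
    (S : α → Set (ι → ℝ)) : ∃ M > 0, ∀ a, (S a).Nonempty → ∃ μ ∈ S a, ∀ i, μ i ≤ M := by
  choose! g hg using fun a (ha : (S a).Nonempty) => ha
  obtain ⟨M, hM⟩ := Finite.exists_le fun ai : α × ι => g ai.1 ai.2
  exact ⟨max M 1, by positivity, fun a ha =>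
    ⟨g a, hg a ha, fun i => (hM (a, i)).trans (le_max_left M 1)⟩⟩

/-- Existence of a valid big-M bound: there is `M > 0` such that every feasible point `(x, y)`
of the linear bilevel problem admits a lower-level KKT multiplier `μ` with `0 ≤ μᵢ ≤ M`. -/
theorem exists_bigM_bound {k p m q : ℕ}
    (Al : Matrix (Fin k) (Fin p) ℝ) (bl : Fin k → ℝ)
    (Af : Matrix (Fin m) (Fin p) ℝ) (Bf : Matrix (Fin m) (Fin q) ℝ)
    (bf : Fin m → ℝ) (cf : Fin q → ℝ) :
    ∃ M : ℝ, 0 < M ∧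
      ∀ (x : Fin p → ℝ) (y : Fin q → ℝ),
        Al.mulVec x ≤ bl →
        (Af.mulVec x + Bf.mulVec y ≤ bf ∧
          ∀ y' : Fin q → ℝ, Af.mulVec x + Bf.mulVec y' ≤ bf → cf ⬝ᵥ y ≤ cf ⬝ᵥ y') →
        ∃ μ : Fin m → ℝ, 0 ≤ μ ∧ (∀ i, μ i ≤ M) ∧
          -(Bf.transpose.mulVec μ) = cf ∧
          ∀ i, μ i * (Af.mulVec x + Bf.mulVec y - bf) i = 0 := by
  obtain ⟨M, hM, hbound⟩ := Finite.exists_pos_forall_exists_mem_le fun s : Set (Fin m) =>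
    {μ | 0 ≤ μ ∧ (∀ i ∉ s, μ i = 0) ∧ -(Bfᵀ *ᵥ μ) = cf}
  refine ⟨M, hM, fun x y _ ⟨hy, hopt⟩ => ?_⟩
  obtain ⟨μ, ⟨hμ, hμs, hμc⟩, hμM⟩ := hbound {i | (Af *ᵥ x + Bf *ᵥ y) i = bf i}
    (exists_multiplier_of_forall_mulVec_nonpos _ (dotProduct_nonneg_of_feasible_direction hy hopt))
  refine ⟨μ, hμ, hμM, hμc, fun i => ?_⟩
  by_cases hi : (Af *ᵥ x + Bf *ᵥ y) i = bf i
  · simp [hi]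
  · simp [hμs i hi]
end

section
/- (Big-M reformulation, forward direction.) Let A_l, b_l, A_f, B_f, b_f, c_f be as in the linear bilevel problem (LBP) and suppose the set D = {(x,y) : A_l x ≤ b_l, A_f x + B_f y ≤ b_f} is compact. Then there exists M > 0 such that for every feasible point (x,y) of (LBP) (i.e., A_l x ≤ b_l and y minimizes c_fᵀ y over {y : A_f x + B_f y ≤ b_f}), there exist μ ∈ ℝ^m and z ∈ {0,1}^m such that (x,y,μ,z) satisfies: A_l x ≤ b_l, A_f x + B_f y ≤ b_f, −B_fᵀ μ = c_f, μ ≥ 0, μ ≤ M(1−z) componentwise, and b_f − A_f x − B_f y ≤ M z componentwise; moreover if (x,y) is optimal for (LBP), then (x,y,μ,z) is optimal for the problem of minimizing the leader's objective over all such tuples. -/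
/-
An optimal lower-level solution `y` admits KKT multipliers supported on the active constraints
(LP duality, via Farkas' lemma). These multiplier sets depend only on the active set, of which
there are finitely many, so choosing one multiplier per active set bounds `μ` uniformly, while
compactness of `D` bounds the slacks; together they give `M`. Conversely, in a Big-M feasible
point the binary `z` forces complementary slackness, so its `(x, y)` is feasible for (LBP), and
an (LBP)-optimal point therefore stays optimal for the Big-M problem.
-/

open Matrix

/-- Feasibility for the optimistic linear bilevel problem (LBP): `A_l x ≤ b_l` and `y` is an
optimal solution of the lower-level LP `min c_fᵀ y  s.t. A_f x + B_f y ≤ b_f`. -/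
def LBPFeasible {k p m q : ℕ}
    (Al : Matrix (Fin k) (Fin p) ℝ) (bl : Fin k → ℝ)
    (Af : Matrix (Fin m) (Fin p) ℝ) (Bf : Matrix (Fin m) (Fin q) ℝ)
    (bf : Fin m → ℝ) (cf : Fin q → ℝ) (x : Fin p → ℝ) (y : Fin q → ℝ) : Prop :=
  Al.mulVec x ≤ bl ∧ Af.mulVec x + Bf.mulVec y ≤ bf ∧
    ∀ y' : Fin q → ℝ, Af.mulVec x + Bf.mulVec y' ≤ bf → cf ⬝ᵥ y ≤ cf ⬝ᵥ y'

/-- Feasibility for the Big-M reformulation with binary vector `z ∈ {0,1}^m`. -/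
def BigMFeasible {k p m q : ℕ}
    (Al : Matrix (Fin k) (Fin p) ℝ) (bl : Fin k → ℝ)
    (Af : Matrix (Fin m) (Fin p) ℝ) (Bf : Matrix (Fin m) (Fin q) ℝ)
    (bf : Fin m → ℝ) (cf : Fin q → ℝ) (M : ℝ)
    (x : Fin p → ℝ) (y : Fin q → ℝ) (μ : Fin m → ℝ) (z : Fin m → ℝ) : Prop :=
  (∀ i, z i = 0 ∨ z i = 1) ∧
  Al.mulVec x ≤ bl ∧
  Af.mulVec x + Bf.mulVec y ≤ bf ∧
  -(Bf.transpose.mulVec μ) = cf ∧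
  0 ≤ μ ∧
  (∀ i, μ i ≤ M * (1 - z i)) ∧
  (∀ i, (bf - Af.mulVec x - Bf.mulVec y) i ≤ M * z i)

open Filter Topology

section LinearProgramming

variable {𝕜 ι m n : Type*} [Field 𝕜] [LinearOrder 𝕜] [IsStrictOrderedRing 𝕜]
  [Fintype m] [Fintype n]

/-- KKT multipliers of the LP `min cᵀ y  s.t.  B y ≤ d` that vanish off `S`; taking for `S` the
constraints active at `y` encodes complementary slackness. -/
def lagrangeMultipliers (B : Matrix m n 𝕜) (c : n → 𝕜) (S : Set m) : Set (m → 𝕜) :=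
  {μ | 0 ≤ μ ∧ -(Bᵀ *ᵥ μ) = c ∧ ∀ i ∉ S, μ i = 0}

/- Eliminating the direction `a j` (the projection `v ↦ v - r v • a j` below) reduces
Farkas' lemma for `insert j s` to Farkas' lemma for `s`. -/
theorem farkas_alternative_insert [DecidableEq ι] {s : Finset ι} {j : ι} (hj : j ∉ s)
    (ih : ∀ (a : ι → n → 𝕜) (b : n → 𝕜), (∃ t : ι → 𝕜, 0 ≤ t ∧ ∑ i ∈ s, t i • a i = b) ∨
      ∃ w : n → 𝕜, (∀ i ∈ s, 0 ≤ a i ⬝ᵥ w) ∧ b ⬝ᵥ w < 0)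
    {a : ι → n → 𝕜} {b w : n → 𝕜} (hw : ∀ i ∈ s, 0 ≤ a i ⬝ᵥ w) (hbw : b ⬝ᵥ w < 0)
    (hjw : a j ⬝ᵥ w < 0) :
    (∃ t : ι → 𝕜, 0 ≤ t ∧ ∑ i ∈ insert j s, t i • a i = b) ∨
      ∃ w : n → 𝕜, (∀ i ∈ insert j s, 0 ≤ a i ⬝ᵥ w) ∧ b ⬝ᵥ w < 0 := by
  set r : (n → 𝕜) → 𝕜 := fun v => v ⬝ᵥ w / (a j ⬝ᵥ w)
  rcases ih (fun i => a i - r (a i) • a j) (b - r b • a j) with ⟨t, ht, hsum⟩ | ⟨w', hw', hbw'⟩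
  · set τ := r b - ∑ i ∈ s, t i * r (a i)
    have hτ : 0 ≤ τ := by
      have hτ_eq : τ = (b ⬝ᵥ w - ∑ i ∈ s, t i * (a i ⬝ᵥ w)) / (a j ⬝ᵥ w) := by
        simp only [τ, r, sub_div, Finset.sum_div, mul_div_assoc]
      have : 0 ≤ ∑ i ∈ s, t i * (a i ⬝ᵥ w) :=
        Finset.sum_nonneg fun i hi => mul_nonneg (ht i) (hw i hi)
      rw [hτ_eq]
      exact div_nonneg_of_nonpos (by linarith) hjw.le
    refine .inl ⟨Function.update t j τ, ?_, ?_⟩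
    · intro i
      rcases eq_or_ne i j with rfl | hij
      · simpa using hτ
      · simpa [hij] using ht i
    · rw [Finset.sum_insert hj, Function.update_self,
        Finset.sum_congr rfl fun i hi => by rw [Function.update_of_ne (ne_of_mem_of_not_mem hi hj)]]
      simp only [smul_sub, smul_smul, Finset.sum_sub_distrib, ← Finset.sum_smul] at hsum
      rw [show τ = r b - ∑ i ∈ s, t i * r (a i) from rfl]
      linear_combination (norm := module) hsum
  · have hr : ∀ v, v ⬝ᵥ (w' - (a j ⬝ᵥ w' / (a j ⬝ᵥ w)) • w) = (v - r v • a j) ⬝ᵥ w' := by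
      intro v
      simp only [r, dotProduct_sub, sub_dotProduct, dotProduct_smul, smul_dotProduct, smul_eq_mul]
      ring
    refine .inr ⟨w' - (a j ⬝ᵥ w' / (a j ⬝ᵥ w)) • w, ?_, by rw [hr]; exact hbw'⟩
    simp only [Finset.mem_insert, forall_eq_or_imp, hr]
    refine ⟨?_, hw'⟩
    simp [r, div_self hjw.ne]

theorem farkas_alternative [DecidableEq ι] (s : Finset ι) (a : ι → n → 𝕜) (b : n → 𝕜) :
    (∃ t : ι → 𝕜, 0 ≤ t ∧ ∑ i ∈ s, t i • a i = b) ∨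
      ∃ w : n → 𝕜, (∀ i ∈ s, 0 ≤ a i ⬝ᵥ w) ∧ b ⬝ᵥ w < 0 := by
  induction s using Finset.induction_on generalizing a b with
  | empty =>
    by_cases hb : b = 0
    · exact .inl ⟨0, le_rfl, by simp [hb]⟩
    · have hbb : 0 < b ⬝ᵥ b :=
        (Finset.sum_nonneg fun i _ => mul_self_nonneg (b i)).lt_of_ne
          (Ne.symm (dotProduct_self_eq_zero.not.2 hb))
      exact .inr ⟨-b, by simp, by simpa [dotProduct_neg] using hbb⟩
  | insert j s hj ih =>
    rcases ih a b with ⟨t, ht, hsum⟩ | ⟨w, hw, hbw⟩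
    · refine .inl ⟨Function.update t j 0, ?_, ?_⟩
      · intro i
        rcases eq_or_ne i j with rfl | hij
        · simp
        · simpa [hij] using ht i
      · rw [Finset.sum_insert hj, ← hsum]
        simp only [Function.update_self, zero_smul, zero_add]
        exact Finset.sum_congr rfl fun i hi => by
          rw [Function.update_of_ne (ne_of_mem_of_not_mem hi hj)]
    · by_cases hjw : 0 ≤ a j ⬝ᵥ w
      · exact .inr ⟨w, Finset.forall_mem_insert _ _ _ |>.2 ⟨hjw, hw⟩, hbw⟩
      · exact farkas_alternative_insert hj ih hw hbw (not_le.1 hjw)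

theorem dotProduct_le_of_mem_lagrangeMultipliers {B : Matrix m n 𝕜} {c : n → 𝕜}
    {d μ : m → 𝕜} {y y' : n → 𝕜} (hμ : μ ∈ lagrangeMultipliers B c {i | (B *ᵥ y) i = d i})
    (hy' : B *ᵥ y' ≤ d) : c ⬝ᵥ y ≤ c ⬝ᵥ y' := by
  obtain ⟨hμ0, hc, hμS⟩ := hμ
  have hcv : ∀ v, c ⬝ᵥ v = -(μ ⬝ᵥ B *ᵥ v) := by
    intro v
    rw [← hc, neg_dotProduct, mulVec_transpose, dotProduct_mulVec]
  have hμy : μ ⬝ᵥ B *ᵥ y = μ ⬝ᵥ d := by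
    refine Finset.sum_congr rfl fun i _ => ?_
    by_cases hi : (B *ᵥ y) i = d i
    · rw [hi]
    · rw [hμS i hi, zero_mul, zero_mul]
  rw [hcv, hcv, hμy, neg_le_neg_iff]
  exact dotProduct_le_dotProduct_of_nonneg_left hy' hμ0

end LinearProgramming

section KKT

variable {m n : Type*} [Fintype m] [Fintype n]

theorem eventually_mulVec_sub_smul_le {B : Matrix m n ℝ} {d : m → ℝ} {y w : n → ℝ}
    (hy : B *ᵥ y ≤ d) (hw : ∀ i, (B *ᵥ y) i = d i → 0 ≤ (B *ᵥ w) i) :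
    ∀ᶠ ε in 𝓝[>] (0 : ℝ), B *ᵥ (y - ε • w) ≤ d := by
  simp only [mulVec_sub, mulVec_smul, Pi.le_def, Pi.sub_apply, Pi.smul_apply, smul_eq_mul]
  refine eventually_all.2 fun i => ?_
  by_cases hi : (B *ᵥ y) i = d i
  · filter_upwards [self_mem_nhdsWithin] with ε (hε : 0 < ε)
    nlinarith [hw i hi]
  · have hcont : Tendsto (fun ε : ℝ => (B *ᵥ y) i - ε * (B *ᵥ w) i) (𝓝 0) (𝓝 ((B *ᵥ y) i)) :=
      (continuous_const.sub (continuous_id.mul continuous_const)).tendsto' _ _ (by simp)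
    exact nhdsWithin_le_nhds <|
      (hcont.eventually (eventually_lt_nhds ((hy i).lt_of_ne hi))).mono fun _ => le_of_lt

theorem lagrangeMultipliers_nonempty_of_isMin {B : Matrix m n ℝ} {c : n → ℝ} {d : m → ℝ}
    {y : n → ℝ} (hy : B *ᵥ y ≤ d) (hopt : IsMinOn (c ⬝ᵥ ·) {y' | B *ᵥ y' ≤ d} y) :
    (lagrangeMultipliers B c {i | (B *ᵥ y) i = d i}).Nonempty := by
  classical
  rcases farkas_alternative {i | (B *ᵥ y) i = d i} B (-c) with ⟨t, ht, hsum⟩ | ⟨w, hw, hcw⟩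
  · refine ⟨fun i => if (B *ᵥ y) i = d i then t i else 0, fun i => ?_, ?_, fun i hi => if_neg hi⟩
    · dsimp only
      split_ifs
      exacts [ht i, le_rfl]
    · have hsum' : ∑ i, (if (B *ᵥ y) i = d i then t i else 0) • B i = -c := by
        rw [← hsum, Finset.sum_filter]
        simp only [ite_smul, zero_smul]
      rw [mulVec_transpose, vecMul_eq_sum, hsum', neg_neg]
  · have hfeas := eventually_mulVec_sub_smul_le hy fun i hi =>
      hw i (Finset.mem_filter.2 ⟨Finset.mem_univ i, hi⟩)
    obtain ⟨ε, hε_feas, hε⟩ := (hfeas.and self_mem_nhdsWithin).exists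
    have hdesc := isMinOn_iff.1 hopt _ hε_feas
    rw [dotProduct_sub, dotProduct_smul, smul_eq_mul] at hdesc
    rw [neg_dotProduct] at hcw
    nlinarith [show (0 : ℝ) < ε from hε]

end KKT

theorem Finite.exists_forall_exists_mem_le {α β : Type*} [Finite α] [Nonempty β] [Preorder β]
    [IsDirectedOrder β] (P : α → Set β) :
    ∃ M, ∀ a, (P a).Nonempty → ∃ b ∈ P a, b ≤ M := by
  classical
  obtain ⟨M, hM⟩ := Finite.exists_le fun a =>
    if h : (P a).Nonempty then h.some else Classical.arbitrary β
  exact ⟨M, fun a ha => ⟨ha.some, ha.some_mem, by simpa [ha] using hM a⟩⟩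

section BigM

variable {k p m q : ℕ} {Al : Matrix (Fin k) (Fin p) ℝ} {bl : Fin k → ℝ}
  {Af : Matrix (Fin m) (Fin p) ℝ} {Bf : Matrix (Fin m) (Fin q) ℝ} {bf : Fin m → ℝ}
  {cf : Fin q → ℝ} {M : ℝ} {x : Fin p → ℝ} {y : Fin q → ℝ} {μ : Fin m → ℝ}

theorem LBPFeasible.lagrangeMultipliers_nonempty (h : LBPFeasible Al bl Af Bf bf cf x y) :
    (lagrangeMultipliers Bf cf {i | (Bf *ᵥ y) i = (bf - Af *ᵥ x) i}).Nonempty :=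
  lagrangeMultipliers_nonempty_of_isMin (le_sub_iff_add_le'.2 h.2.1)
    (isMinOn_iff.2 fun y' hy' => h.2.2 y' (le_sub_iff_add_le'.1 hy'))

theorem LBPFeasible.bigMFeasible (h : LBPFeasible Al bl Af Bf bf cf x y)
    (hμ : μ ∈ lagrangeMultipliers Bf cf {i | (Bf *ᵥ y) i = (bf - Af *ᵥ x) i})
    (hμM : ∀ i, μ i ≤ M) (hslackM : ∀ i, (bf - Af *ᵥ x - Bf *ᵥ y) i ≤ M) :
    BigMFeasible Al bl Af Bf bf cf M x y μ
      (fun i => if (Bf *ᵥ y) i = (bf - Af *ᵥ x) i then 0 else 1) := by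
  obtain ⟨hμ0, hc, hμS⟩ := hμ
  refine ⟨fun i => ?_, h.1, h.2.1, hc, hμ0, fun i => ?_, fun i => ?_⟩ <;> dsimp only
  · split_ifs <;> simp
  · split_ifs with hi
    · simpa using hμM i
    · simp [hμS i hi]
  · split_ifs with hi
    · simp [Pi.sub_apply, ← hi]
    · simpa using hslackM i

/- The binary `z` enforces complementary slackness, so `μ` certifies optimality of `y`
in the lower-level LP. -/
theorem BigMFeasible.lbpFeasible {z : Fin m → ℝ}
    (h : BigMFeasible Al bl Af Bf bf cf M x y μ z) : LBPFeasible Al bl Af Bf bf cf x y := by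
  obtain ⟨hz, hAl, hfeas, hc, hμ0, hμM, hslackM⟩ := h
  have hμS : ∀ i ∉ {i | (Bf *ᵥ y) i = (bf - Af *ᵥ x) i}, μ i = 0 := by
    intro i hi
    have hslack_nonneg : 0 ≤ (bf - Af *ᵥ x - Bf *ᵥ y) i := by
      simpa [sub_sub, add_comm] using hfeas i
    rcases hz i with hzi | hzi
    · have := hslackM i
      rw [hzi, mul_zero] at this
      simp only [Set.mem_ofPred_eq, Pi.sub_apply] at this hslack_nonneg hi
      exact absurd (by linarith) hi
    · have := hμM i
      rw [hzi, sub_self, mul_zero] at this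
      exact le_antisymm this (hμ0 i)
  exact ⟨hAl, hfeas, fun y' hy' =>
    dotProduct_le_of_mem_lagrangeMultipliers ⟨hμ0, hc, hμS⟩ (le_sub_iff_add_le'.2 hy')⟩

end BigM

/-- Big-M reformulation, forward direction: if the joint feasible region `D` is compact, then
there is `M > 0` such that every feasible point `(x,y)` of (LBP) lifts to a feasible point
`(x,y,μ,z)` of the Big-M problem, which is moreover optimal for the Big-M problem whenever
`(x,y)` is optimal for (LBP). -/
theorem bigM_forward {k p m q : ℕ}
    (Al : Matrix (Fin k) (Fin p) ℝ) (bl : Fin k → ℝ)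
    (Af : Matrix (Fin m) (Fin p) ℝ) (Bf : Matrix (Fin m) (Fin q) ℝ)
    (bf : Fin m → ℝ) (cf : Fin q → ℝ) (cl : Fin p → ℝ) (dl : Fin q → ℝ)
    (hD : IsCompact {v : (Fin p → ℝ) × (Fin q → ℝ) |
      Al.mulVec v.1 ≤ bl ∧ Af.mulVec v.1 + Bf.mulVec v.2 ≤ bf}) :
    ∃ M : ℝ, 0 < M ∧
      ∀ (x : Fin p → ℝ) (y : Fin q → ℝ),
        LBPFeasible Al bl Af Bf bf cf x y →
        ∃ (μ : Fin m → ℝ) (z : Fin m → ℝ),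
          BigMFeasible Al bl Af Bf bf cf M x y μ z ∧
          ((∀ (x' : Fin p → ℝ) (y' : Fin q → ℝ), LBPFeasible Al bl Af Bf bf cf x' y' →
              cl ⬝ᵥ x + dl ⬝ᵥ y ≤ cl ⬝ᵥ x' + dl ⬝ᵥ y') →
            ∀ (x' : Fin p → ℝ) (y' : Fin q → ℝ) (μ' : Fin m → ℝ) (z' : Fin m → ℝ),
              BigMFeasible Al bl Af Bf bf cf M x' y' μ' z' →
              cl ⬝ᵥ x + dl ⬝ᵥ y ≤ cl ⬝ᵥ x' + dl ⬝ᵥ y') := by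
  choose C hC using fun i => hD.bddAbove_image
    (f := fun v : (Fin p → ℝ) × (Fin q → ℝ) => (bf - Af *ᵥ v.1 - Bf *ᵥ v.2) i) (by fun_prop)
  obtain ⟨Mμ, hMμ⟩ := Finite.exists_forall_exists_mem_le (lagrangeMultipliers Bf cf)
  obtain ⟨K, hK⟩ := Finite.exists_le (Mμ ⊔ C)
  refine ⟨max K 1, by positivity, fun x y hxy => ?_⟩
  obtain ⟨μ, hμ, hμM⟩ := hMμ _ hxy.lagrangeMultipliers_nonempty
  refine ⟨μ, _, hxy.bigMFeasible hμ (fun i => ?_) (fun i => ?_),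
    fun hopt x' y' μ' z' h' => hopt x' y' h'.lbpFeasible⟩
  · exact (hμM i).trans ((le_sup_left.trans (hK i)).trans (le_max_left _ _))
  · exact (hC i ⟨(x, y), ⟨hxy.1, hxy.2.1⟩, rfl⟩).trans
      ((le_sup_right.trans (hK i)).trans (le_max_left _ _))
end

section
/- (Big-M reformulation, backward direction.) Let A_l, b_l, A_f, B_f, b_f, c_f be as in the linear bilevel problem (LBP), suppose D = {(x,y) : A_l x ≤ b_l, A_f x + B_f y ≤ b_f} is compact, and let M > 0 be arbitrary. If (x,y,μ,z) with z ∈ {0,1}^m satisfies A_l x ≤ b_l, A_f x + B_f y ≤ b_f, −B_fᵀ μ = c_f, μ ≥ 0, μ ≤ M(1−z) componentwise, and b_f − A_f x − B_f y ≤ M z componentwise, then μ_i (A_f x + B_f y − b_f)_i = 0 for all i ∈ [m], and consequently (x,y) is a feasible point of (LBP): y minimizes c_fᵀ y over {y : A_f x + B_f y ≤ b_f}. -/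
/-!
Since `z` is binary, one of the bounds `μ i ≤ M (1 - z i)` and `(b_f - A_f x - B_f y) i ≤ M z i`
has right-hand side `0`, which gives complementary slackness. Then `μ` certifies optimality of
`y`: for every feasible `y'`, `c_f ⬝ y' = -μ ⬝ B_f y' ≥ -μ ⬝ (b_f - A_f x) = -μ ⬝ B_f y = c_f ⬝ y`.
-/

open Matrix

section BigM

theorem mul_eq_zero_of_bigM {R : Type*} [Ring R] [PartialOrder R] {μ s z M : R}
    (hz : z = 0 ∨ z = 1) (hμ : 0 ≤ μ) (hs : 0 ≤ s) (hμM : μ ≤ M * (1 - z)) (hsM : s ≤ M * z) :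
    μ * s = 0 := by
  rcases hz with rfl | rfl
  · rw [le_antisymm (by simpa using hsM) hs, mul_zero]
  · rw [le_antisymm (by simpa using hμM) hμ, zero_mul]

variable {R ι κ : Type*} [CommRing R] [PartialOrder R] [IsOrderedRing R] [Fintype ι] [Fintype κ]

theorem dotProduct_le_of_dual_feasible {B : Matrix ι κ R} {μ r : ι → R} {c y y' : κ → R}
    (hμ : 0 ≤ μ) (hc : -(Bᵀ *ᵥ μ) = c) (hy : μ ⬝ᵥ (B *ᵥ y) = μ ⬝ᵥ r) (hy' : B *ᵥ y' ≤ r) :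
    c ⬝ᵥ y ≤ c ⬝ᵥ y' := by
  have hpair (v : κ → R) : c ⬝ᵥ v = -(μ ⬝ᵥ (B *ᵥ v)) := by
    rw [← hc, neg_dotProduct, mulVec_transpose, dotProduct_mulVec]
  rw [hpair, hpair, neg_le_neg_iff, hy]
  exact dotProduct_le_dotProduct_of_nonneg_left hy' hμ

end BigM

theorem bigM_backward_general {k p m q : ℕ}
    (Al : Matrix (Fin k) (Fin p) ℝ) (bl : Fin k → ℝ)
    (Af : Matrix (Fin m) (Fin p) ℝ) (Bf : Matrix (Fin m) (Fin q) ℝ)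
    (bf : Fin m → ℝ) (cf : Fin q → ℝ)
    (M : ℝ)
    (x : Fin p → ℝ) (y : Fin q → ℝ) (μ : Fin m → ℝ) (z : Fin m → ℝ)
    (hfeas : BigMFeasible Al bl Af Bf bf cf M x y μ z) :
    (∀ i, μ i * (Af.mulVec x + Bf.mulVec y - bf) i = 0) ∧
    LBPFeasible Al bl Af Bf bf cf x y := by
  obtain ⟨hz, hAl, hF, hcf, hμ, hμM, hslack⟩ := hfeas
  have hcs (i : Fin m) : μ i * (Af *ᵥ x + Bf *ᵥ y - bf) i = 0 := by
    have hs : 0 ≤ (bf - Af *ᵥ x - Bf *ᵥ y) i := by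
      simpa [sub_sub, sub_nonneg] using hF i
    have := mul_eq_zero_of_bigM (hz i) (hμ i) hs (hμM i) (hslack i)
    simp only [Pi.sub_apply, Pi.add_apply] at this ⊢
    linear_combination -this
  have hpair : μ ⬝ᵥ (Bf *ᵥ y) = μ ⬝ᵥ (bf - Af *ᵥ x) := by
    have hsum : μ ⬝ᵥ (Af *ᵥ x + Bf *ᵥ y - bf) = 0 := Finset.sum_eq_zero fun i _ => hcs i
    rw [dotProduct_sub, dotProduct_add] at hsum
    rw [dotProduct_sub]
    linarith
  exact ⟨hcs, hAl, hF, fun y' hy' =>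
    dotProduct_le_of_dual_feasible hμ hcf hpair (le_sub_iff_add_le'.mpr hy')⟩

/-- Big-M reformulation, backward direction: if `D` is compact, `M > 0`, and `(x,y,μ,z)` with
binary `z` is feasible for the Big-M problem, then complementary slackness holds and `(x,y)`
is a feasible point of (LBP). -/
theorem bigM_backward {k p m q : ℕ}
    (Al : Matrix (Fin k) (Fin p) ℝ) (bl : Fin k → ℝ)
    (Af : Matrix (Fin m) (Fin p) ℝ) (Bf : Matrix (Fin m) (Fin q) ℝ)
    (bf : Fin m → ℝ) (cf : Fin q → ℝ)
    (hD : IsCompact {v : (Fin p → ℝ) × (Fin q → ℝ) |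
      Al.mulVec v.1 ≤ bl ∧ Af.mulVec v.1 + Bf.mulVec v.2 ≤ bf})
    (M : ℝ) (hM : 0 < M)
    (x : Fin p → ℝ) (y : Fin q → ℝ) (μ : Fin m → ℝ) (z : Fin m → ℝ)
    (hfeas : BigMFeasible Al bl Af Bf bf cf M x y μ z) :
    (∀ i, μ i * (Af.mulVec x + Bf.mulVec y - bf) i = 0) ∧
    LBPFeasible Al bl Af Bf bf cf x y :=
  bigM_backward_general Al bl Af Bf bf cf M x y μ z hfeas
end

section
/- (Knapsack rounding lemma.) Let n ≥ 1, let a_1, …, a_n ∈ ℕ be positive with β = max_i a_i ≥ 2, let δ ∈ ℕ, and let M > β². Define f(x) = Σ_{i=1}^n a_i x_i and g(x) = Σ_{i=1}^n min(x_i, 1 − x_i) for x ∈ ℝ^n. If x ∈ [0,1]^n satisfies Σ_{i=1}^n a_i x_i ≤ δ and x ∉ {0,1}^n, then there exists z ∈ {0,1}^n with Σ_{i=1}^n a_i z_i ≤ δ and f(x) − M·g(x) < f(z). -/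
/-!
Round `x` to its nearest 0/1 point `y`; coordinatewise `|xᵢ - yᵢ| = min(xᵢ, 1 - xᵢ)`, so
`|f(x) - f(y)| ≤ β g(x)`, and `g(x) > 0` because `x` is fractional. If `y` is feasible it is the
required `z`, since `β g ≤ β² g < M g`. Otherwise `f(y) ≥ δ + 1 > f(x)` forces `β g ≥ 1`, and a
feasible subset of the support of `y` that cannot be enlarged within it has
`f(z) ≥ δ + 1 - β ≥ f(x) + 1 - β`, so `f(x) - f(z) < β ≤ β² g < M g`.
-/

open Finset

theorem Finset.exists_subset_sum_le_lt_add {ι M : Type*} [DecidableEq ι] [AddCommMonoid M]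
    [LinearOrder M] (w : ι → M) {B : Finset ι} {δ : M} (hδ : 0 ≤ δ)
    (hB : δ < ∑ i ∈ B, w i) :
    ∃ C ⊆ B, ∑ i ∈ C, w i ≤ δ ∧ ∃ j ∈ B, δ < w j + ∑ i ∈ C, w i := by
  set feasible := B.powerset.filter fun C => ∑ i ∈ C, w i ≤ δ
  have h_empty : ∅ ∈ feasible := by simpa [feasible] using hδ
  obtain ⟨C, hC, hC_max⟩ := feasible.exists_max_image card ⟨∅, h_empty⟩
  obtain ⟨hCB, hC_le⟩ : C ⊆ B ∧ ∑ i ∈ C, w i ≤ δ := by simpa [feasible] using hC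
  have hCB_ne : C ≠ B := by rintro rfl; exact hC_le.not_gt hB
  obtain ⟨j, hjB, hjC⟩ := exists_of_ssubset (hCB.ssubset_of_ne hCB_ne)
  refine ⟨C, hCB, hC_le, j, hjB, lt_of_not_ge fun h_insert => ?_⟩
  have h_mem : insert j C ∈ feasible := by
    simpa [feasible, sum_insert hjC, insert_subset_iff, hjB, hCB] using h_insert
  have := hC_max _ h_mem
  rw [card_insert_of_notMem hjC] at this
  omega

theorem abs_sub_ite_half_lt_eq_min {t : ℝ} (ht : t ∈ Set.Icc (0 : ℝ) 1) :
    |t - if 1 / 2 < t then 1 else 0| = min t (1 - t) := by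
  obtain ⟨ht0, ht1⟩ := ht
  split_ifs with h
  · rw [abs_of_nonpos (by linarith), min_eq_right (by linarith)]
    ring
  · rw [sub_zero, abs_of_nonneg ht0, min_eq_left (by linarith)]

theorem abs_sum_mul_sub_sum_filter_half_lt_le {ι : Type*} [Fintype ι] (a x : ι → ℝ) {β : ℝ}
    (ha0 : ∀ i, 0 ≤ a i) (haβ : ∀ i, a i ≤ β) (hx : ∀ i, x i ∈ Set.Icc (0 : ℝ) 1) :
    |∑ i, a i * x i - ∑ i ∈ univ.filter (fun i => 1 / 2 < x i), a i|
      ≤ β * ∑ i, min (x i) (1 - x i) := by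
  rw [sum_filter, ← sum_sub_distrib, mul_sum]
  refine (abs_sum_le_sum_abs _ _).trans (sum_le_sum fun i _ => ?_)
  have h_min_nonneg : 0 ≤ min (x i) (1 - x i) := le_min (hx i).1 (by linarith [(hx i).2])
  calc |a i * x i - if 1 / 2 < x i then a i else 0|
      = a i * |x i - if 1 / 2 < x i then 1 else 0| := by
        rw [← abs_of_nonneg (ha0 i), ← abs_mul, abs_of_nonneg (ha0 i)]
        split_ifs <;> ring_nf
    _ = a i * min (x i) (1 - x i) := by rw [abs_sub_ite_half_lt_eq_min (hx i)]
    _ ≤ β * min (x i) (1 - x i) := mul_le_mul_of_nonneg_right (haβ i) h_min_nonneg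

theorem sum_min_sub_pos_of_not_forall_eq_zero_or_eq_one {ι : Type*} [Fintype ι] {x : ι → ℝ}
    (hx : ∀ i, x i ∈ Set.Icc (0 : ℝ) 1) (hfrac : ¬ ∀ i, x i = 0 ∨ x i = 1) :
    0 < ∑ i, min (x i) (1 - x i) := by
  push Not at hfrac
  obtain ⟨i₀, hi₀0, hi₀1⟩ := hfrac
  refine sum_pos' (fun i _ => le_min (hx i).1 (by linarith [(hx i).2])) ⟨i₀, mem_univ _, ?_⟩
  have := (hx i₀).1.lt_of_ne' hi₀0
  have := (hx i₀).2.lt_of_ne hi₀1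
  exact lt_min (by linarith) (by linarith)

theorem knapsack_rounding_general (n : ℕ) (a : Fin n → ℕ)
    (β : ℕ) (hβ : IsGreatest (Set.range fun i => a i) β)
    (δ : ℕ) (M : ℝ) (hM : (β : ℝ) ^ 2 < M)
    (x : Fin n → ℝ) (hx : ∀ i, x i ∈ Set.Icc (0 : ℝ) 1)
    (hxfeas : ∑ i, (a i : ℝ) * x i ≤ (δ : ℝ))
    (hxfrac : ¬ ∀ i, x i = 0 ∨ x i = 1) :
    ∃ z : Fin n → ℝ, (∀ i, z i = 0 ∨ z i = 1) ∧ (∑ i, (a i : ℝ) * z i ≤ (δ : ℝ)) ∧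
      (∑ i, (a i : ℝ) * x i) - M * (∑ i, min (x i) (1 - x i)) < ∑ i, (a i : ℝ) * z i := by
  set g := ∑ i, min (x i) (1 - x i)
  set Y := univ.filter fun i => 1 / 2 < x i
  have hg : 0 < g := sum_min_sub_pos_of_not_forall_eq_zero_or_eq_one hx hxfrac
  have haβ : ∀ i, (a i : ℝ) ≤ β := fun i => by exact_mod_cast hβ.2 ⟨i, rfl⟩
  have h_round : |∑ i, (a i : ℝ) * x i - ∑ i ∈ Y, (a i : ℝ)| ≤ β * g :=
    abs_sum_mul_sub_sum_filter_half_lt_le _ x (fun i => Nat.cast_nonneg _) haβ hx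
  have hβg : (β : ℝ) ^ 2 * g < M * g := mul_lt_mul_of_pos_right hM hg
  suffices ∃ C : Finset (Fin n), ∑ i ∈ C, a i ≤ δ ∧ ∑ i, (a i : ℝ) * x i - M * g < ∑ i ∈ C, a i by
    obtain ⟨C, hC_le, hC_lt⟩ := this
    refine ⟨fun i => if i ∈ C then 1 else 0, fun i => by by_cases hi : i ∈ C <;> simp [hi],
      ?_, ?_⟩ <;> simp only [mul_ite, mul_one, mul_zero, sum_ite_mem, univ_inter]
    · exact_mod_cast hC_le
    · exact_mod_cast hC_lt
  by_cases hY : ∑ i ∈ Y, a i ≤ δ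
  · have hβ_sq : (β : ℝ) ≤ β ^ 2 := by exact_mod_cast Nat.le_self_pow two_ne_zero β
    refine ⟨Y, hY, ?_⟩
    push_cast
    linarith [(abs_le.mp h_round).2, mul_le_mul_of_nonneg_right hβ_sq hg.le]
  · obtain ⟨C, -, hC_le, j, -, hC_lt⟩ :=
      exists_subset_sum_le_lt_add a (Nat.zero_le δ) (not_le.mp hY)
    have hY_cast : (δ : ℝ) + 1 ≤ ∑ i ∈ Y, (a i : ℝ) := by exact_mod_cast not_le.mp hY
    have hC_cast : (δ : ℝ) + 1 ≤ a j + ∑ i ∈ C, (a i : ℝ) := by exact_mod_cast hC_lt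
    have h_one : 1 ≤ (β : ℝ) * g := by linarith [(abs_le.mp h_round).1]
    have h_β_le : (β : ℝ) ≤ β ^ 2 * g := by nlinarith [(Nat.cast_nonneg β : (0 : ℝ) ≤ β)]
    refine ⟨C, hC_le, ?_⟩
    push_cast
    linarith [haβ j]

/-- Knapsack rounding lemma: if `β = maxᵢ aᵢ ≥ 2` and `M > β²`, then any fractional feasible
point `x ∈ [0,1]^n` of the knapsack relaxation is strictly beaten (for the penalized objective
`f(x) − M·g(x)` with `g(x) = Σᵢ min(xᵢ, 1 − xᵢ)`) by some integer feasible point `z`. -/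
theorem knapsack_rounding (n : ℕ) (hn : 1 ≤ n) (a : Fin n → ℕ) (ha : ∀ i, 0 < a i)
    (β : ℕ) (hβ : IsGreatest (Set.range fun i => a i) β) (hβ2 : 2 ≤ β)
    (δ : ℕ) (M : ℝ) (hM : (β : ℝ) ^ 2 < M)
    (x : Fin n → ℝ) (hx : ∀ i, x i ∈ Set.Icc (0 : ℝ) 1)
    (hxfeas : ∑ i, (a i : ℝ) * x i ≤ (δ : ℝ))
    (hxfrac : ¬ ∀ i, x i = 0 ∨ x i = 1) :
    ∃ z : Fin n → ℝ, (∀ i, z i = 0 ∨ z i = 1) ∧ (∑ i, (a i : ℝ) * z i ≤ (δ : ℝ)) ∧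
      (∑ i, (a i : ℝ) * x i) - M * (∑ i, min (x i) (1 - x i)) < ∑ i, (a i : ℝ) * z i :=
  knapsack_rounding_general n a β hβ δ M hM x hx hxfeas hxfrac
end

section
/- (Integrality of optimal solutions of the penalized knapsack relaxation.) Let n ≥ 1, let a_1, …, a_n ∈ ℕ be positive with β = max_i a_i ≥ 2, let δ ∈ ℕ, and let M = β² + 1. If x* maximizes the function x ↦ Σ_{i=1}^n a_i x_i − M Σ_{i=1}^n min(x_i, 1 − x_i) over the set {x ∈ [0,1]^n : Σ_{i=1}^n a_i x_i ≤ δ}, then x* ∈ {0,1}^n and x* maximizes Σ_{i=1}^n a_i x_i over {x ∈ {0,1}^n : Σ_{i=1}^n a_i x_i ≤ δ}. -/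
/-!
Round each coordinate of a non-integral feasible `x` to the nearer of `0` and `1`; since every
weight is at most `β`, this changes `Σ aᵢ xᵢ` by at most `β P`, where `P = Σ min(xᵢ, 1 - xᵢ) > 0`
is the penalty. If the rounded point is within budget, it beats `x` because `β < β² + 1`.
Otherwise `β P ≥ 1` by integrality of the data, and a greedily chosen subset of the rounded-up
coordinates misses the budget `δ ≥ Σ aᵢ xᵢ` by less than `β ≤ β² P`, so it beats `x` again.
Hence a maximizer is integral, and on integral points the objective is the knapsack value.
-/

open Finset

theorem Finset.exists_subset_sum_le_lt_sum_add {ι M : Type*} [DecidableEq ι] [AddCommMonoid M]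
    [LinearOrder M] [IsOrderedAddMonoid M] (a : ι → M) {β δ : M} (hδ : 0 ≤ δ) (R : Finset ι)
    (haβ : ∀ i ∈ R, a i ≤ β) (hR : δ < ∑ i ∈ R, a i) :
    ∃ S ⊆ R, ∑ i ∈ S, a i ≤ δ ∧ δ < ∑ i ∈ S, a i + β := by
  induction R using Finset.induction_on with
  | empty => exact absurd hR (by simpa using hδ)
  | insert j R hj ih =>
    rw [sum_insert hj] at hR
    by_cases hRδ : ∑ i ∈ R, a i ≤ δ
    · refine ⟨R, subset_insert j R, hRδ, ?_⟩
      calc δ < a j + ∑ i ∈ R, a i := hR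
        _ ≤ ∑ i ∈ R, a i + β := by rw [add_comm]; gcongr; exact haβ j (mem_insert_self j R)
    · obtain ⟨S, hSR, hS⟩ := ih (fun i hi => haβ i (mem_insert_of_mem hi)) (not_le.1 hRδ)
      exact ⟨S, hSR.trans (subset_insert j R), hS⟩

lemma min_self_one_sub_nonneg {t : ℝ} (ht : t ∈ Set.Icc (0 : ℝ) 1) : 0 ≤ min t (1 - t) :=
  le_min ht.1 (sub_nonneg.2 ht.2)

lemma min_self_one_sub_pos {t : ℝ} (ht : t ∈ Set.Icc (0 : ℝ) 1) (h0 : t ≠ 0) (h1 : t ≠ 1) :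
    0 < min t (1 - t) :=
  lt_min (lt_of_le_of_ne ht.1 (Ne.symm h0)) (sub_pos.2 (lt_of_le_of_ne ht.2 h1))

lemma abs_ite_half_lt_sub_self {t : ℝ} (ht : t ∈ Set.Icc (0 : ℝ) 1) :
    |(if 1 / 2 < t then 1 else 0) - t| = min t (1 - t) := by
  obtain ⟨h0, h1⟩ := ht
  split_ifs with h
  · rw [abs_of_nonneg (by linarith), min_eq_right (by linarith)]
  · rw [zero_sub, abs_neg, abs_of_nonneg h0, min_eq_left (by linarith)]

lemma sum_min_one_sub_eq_zero {ι : Type*} [Fintype ι] {x : ι → ℝ}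
    (hx : ∀ i, x i = 0 ∨ x i = 1) : ∑ i, min (x i) (1 - x i) = 0 :=
  sum_eq_zero fun i _ => by rcases hx i with h | h <;> simp [h]

lemma mem_Icc_of_eq_zero_or_eq_one {t : ℝ} (ht : t = 0 ∨ t = 1) : t ∈ Set.Icc (0 : ℝ) 1 := by
  rcases ht with h | h <;> simp [h]

lemma abs_sum_filter_half_lt_sub_le {ι : Type*} [Fintype ι] (a : ι → ℝ) {β : ℝ}
    (ha : ∀ i, 0 ≤ a i) (haβ : ∀ i, a i ≤ β) {x : ι → ℝ} (hx : ∀ i, x i ∈ Set.Icc (0 : ℝ) 1) :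
    |∑ i ∈ univ.filter (fun i => 1 / 2 < x i), a i - ∑ i, a i * x i| ≤
      β * ∑ i, min (x i) (1 - x i) := by
  rw [sum_filter, ← sum_sub_distrib, mul_sum]
  refine (abs_sum_le_sum_abs _ _).trans (sum_le_sum fun i _ => ?_)
  calc |(if 1 / 2 < x i then a i else 0) - a i * x i|
      = a i * |(if 1 / 2 < x i then 1 else 0) - x i| := by
        rw [← abs_of_nonneg (ha i), ← abs_mul, abs_of_nonneg (ha i)]
        split_ifs <;> ring_nf
    _ = a i * min (x i) (1 - x i) := by rw [abs_ite_half_lt_sub_self (hx i)]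
    _ ≤ β * min (x i) (1 - x i) := by
        gcongr
        · exact min_self_one_sub_nonneg (hx i)
        · exact haβ i

theorem exists_sum_le_gt_sum_mul_sub_penalty {ι : Type*} [Fintype ι] [DecidableEq ι]
    (a : ι → ℕ) {β δ : ℕ} (haβ : ∀ i, a i ≤ β) {x : ι → ℝ} (hx : ∀ i, x i ∈ Set.Icc (0 : ℝ) 1)
    (hxδ : ∑ i, (a i : ℝ) * x i ≤ δ) (hP : 0 < ∑ i, min (x i) (1 - x i)) :
    ∃ S : Finset ι, ∑ i ∈ S, a i ≤ δ ∧
      ∑ i, (a i : ℝ) * x i - ((β : ℝ) ^ 2 + 1) * ∑ i, min (x i) (1 - x i) < ∑ i ∈ S, (a i : ℝ) := by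
  set R := univ.filter fun i => 1 / 2 < x i
  set P := ∑ i, min (x i) (1 - x i)
  have hround := abs_le.1 <| abs_sum_filter_half_lt_sub_le (fun i => (a i : ℝ))
    (fun i => Nat.cast_nonneg _) (fun i => Nat.cast_le.2 (haβ i)) hx
  have hβ : (0 : ℝ) ≤ β := Nat.cast_nonneg β
  by_cases hRδ : ∑ i ∈ R, a i ≤ δ
  · refine ⟨R, hRδ, ?_⟩
    nlinarith [mul_lt_mul_of_pos_right (by nlinarith : (β : ℝ) < (β : ℝ) ^ 2 + 1) hP]
  · obtain ⟨S, -, hSδ, hSβ⟩ := exists_subset_sum_le_lt_sum_add a (Nat.zero_le δ) R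
      (fun i _ => haβ i) (not_le.1 hRδ)
    refine ⟨S, hSδ, ?_⟩
    -- both budget overshoots are overshoots of integers, hence by at least `1`
    have hR : (δ : ℝ) + 1 ≤ ∑ i ∈ R, (a i : ℝ) := by exact_mod_cast not_le.1 hRδ
    have hS : (δ : ℝ) + 1 ≤ ∑ i ∈ S, (a i : ℝ) + β := by exact_mod_cast hSβ
    have hβP : 1 ≤ (β : ℝ) * P := by linarith
    nlinarith [mul_nonneg hβ (sub_nonneg.2 hβP)]

theorem penalized_knapsack_integrality_general (n : ℕ)
    (a : Fin n → ℕ)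
    (β : ℕ) (hβ : IsGreatest (Set.range fun i => a i) β)
    (δ : ℕ) (xstar : Fin n → ℝ)
    (hfeas : (∀ i, xstar i ∈ Set.Icc (0 : ℝ) 1) ∧ ∑ i, (a i : ℝ) * xstar i ≤ (δ : ℝ))
    (hopt : ∀ x : Fin n → ℝ, (∀ i, x i ∈ Set.Icc (0 : ℝ) 1) →
      ∑ i, (a i : ℝ) * x i ≤ (δ : ℝ) →
      (∑ i, (a i : ℝ) * x i) - ((β : ℝ) ^ 2 + 1) * (∑ i, min (x i) (1 - x i)) ≤
        (∑ i, (a i : ℝ) * xstar i)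
          - ((β : ℝ) ^ 2 + 1) * (∑ i, min (xstar i) (1 - xstar i))) :
    (∀ i, xstar i = 0 ∨ xstar i = 1) ∧
    ∀ x : Fin n → ℝ, (∀ i, x i = 0 ∨ x i = 1) → ∑ i, (a i : ℝ) * x i ≤ (δ : ℝ) →
      ∑ i, (a i : ℝ) * x i ≤ ∑ i, (a i : ℝ) * xstar i := by
  obtain ⟨hbox, hbud⟩ := hfeas
  have hopt01 : ∀ x : Fin n → ℝ, (∀ i, x i = 0 ∨ x i = 1) → ∑ i, (a i : ℝ) * x i ≤ δ →
      ∑ i, (a i : ℝ) * x i ≤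
        ∑ i, (a i : ℝ) * xstar i - ((β : ℝ) ^ 2 + 1) * ∑ i, min (xstar i) (1 - xstar i) :=
    fun x hx hxδ => by
      simpa [sum_min_one_sub_eq_zero hx] using
        hopt x (fun i => mem_Icc_of_eq_zero_or_eq_one (hx i)) hxδ
  have hpen : 0 ≤ ∑ i, min (xstar i) (1 - xstar i) :=
    sum_nonneg fun i _ => min_self_one_sub_nonneg (hbox i)
  refine ⟨?_, fun x hx hxδ => by nlinarith [hopt01 x hx hxδ]⟩
  by_contra! hfrac
  obtain ⟨j, hj0, hj1⟩ := hfrac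
  obtain ⟨S, hSδ, hS⟩ := exists_sum_le_gt_sum_mul_sub_penalty a (fun i => hβ.2 ⟨i, rfl⟩) hbox
    hbud (sum_pos' (fun i _ => min_self_one_sub_nonneg (hbox i))
      ⟨j, mem_univ j, min_self_one_sub_pos (hbox j) hj0 hj1⟩)
  have hind := hopt01 (fun i => if i ∈ S then 1 else 0) (fun i => by split_ifs <;> simp)
  simp only [mul_ite, mul_one, mul_zero, sum_ite_mem, univ_inter] at hind
  exact absurd (hind (by exact_mod_cast hSδ)) (not_le.2 hS)

/-- With penalty `M = β² + 1`, every maximizer of the penalized knapsack relaxation over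
`{x ∈ [0,1]^n : Σ aᵢ xᵢ ≤ δ}` is integer and solves the 0/1 knapsack problem. -/
theorem penalized_knapsack_integrality (n : ℕ) (hn : 1 ≤ n)
    (a : Fin n → ℕ) (ha : ∀ i, 0 < a i)
    (β : ℕ) (hβ : IsGreatest (Set.range fun i => a i) β) (hβ2 : 2 ≤ β)
    (δ : ℕ) (xstar : Fin n → ℝ)
    (hfeas : (∀ i, xstar i ∈ Set.Icc (0 : ℝ) 1) ∧ ∑ i, (a i : ℝ) * xstar i ≤ (δ : ℝ))
    (hopt : ∀ x : Fin n → ℝ, (∀ i, x i ∈ Set.Icc (0 : ℝ) 1) →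
      ∑ i, (a i : ℝ) * x i ≤ (δ : ℝ) →
      (∑ i, (a i : ℝ) * x i) - ((β : ℝ) ^ 2 + 1) * (∑ i, min (x i) (1 - x i)) ≤
        (∑ i, (a i : ℝ) * xstar i)
          - ((β : ℝ) ^ 2 + 1) * (∑ i, min (xstar i) (1 - xstar i))) :
    (∀ i, xstar i = 0 ∨ xstar i = 1) ∧
    ∀ x : Fin n → ℝ, (∀ i, x i = 0 ∨ x i = 1) → ∑ i, (a i : ℝ) * x i ≤ (δ : ℝ) →
      ∑ i, (a i : ℝ) * x i ≤ ∑ i, (a i : ℝ) * xstar i :=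
  penalized_knapsack_integrality_general n a β hβ δ xstar hfeas hopt
end

section
/- (MPCC can fail to have a solution while the bilevel problem does.) Consider the system in variables (x, y₁, y₂, μ₁, μ₂): x ≥ 0, 1 + 2(μ₁ + μ₂) y₁ = 0, μ₂ − μ₁ = 0, μ₁ (y₁² − y₂ − x) = 0, μ₂ (y₁² + y₂) = 0, y₁² − y₂ − x ≤ 0, y₁² + y₂ ≤ 0, μ₁ ≥ 0, μ₂ ≥ 0 (the MPCC reformulation of the bilevel problem minimizing x subject to x ≥ 0 and y minimizing y₁ over {y : y₁² − y₂ ≤ x, y₁² + y₂ ≤ 0}). Then: (i) no solution of this system has x = 0 (since x = 0 forces y₁ = y₂ = 0, making the stationarity equation 1 + 2(μ₁+μ₂)·0 = 0 infeasible); (ii) for every x > 0 the system has a solution; consequently the infimum of x over the feasible set of the MPCC is 0 but is not attained, so the MPCC has no optimal solution, whereas the bilevel problem has the unique optimal solution x = 0, y = (0,0). -/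
/-- Feasibility for the MPCC reformulation of Example `BP vs MPCC I`, in variables
`(x, y₁, y₂, μ₁, μ₂)`. -/
def MPCC1Feasible (x y₁ y₂ μ₁ μ₂ : ℝ) : Prop :=
  0 ≤ x ∧
  1 + 2 * (μ₁ + μ₂) * y₁ = 0 ∧
  μ₂ - μ₁ = 0 ∧
  μ₁ * (y₁ ^ 2 - y₂ - x) = 0 ∧
  μ₂ * (y₁ ^ 2 + y₂) = 0 ∧
  y₁ ^ 2 - y₂ - x ≤ 0 ∧
  y₁ ^ 2 + y₂ ≤ 0 ∧
  0 ≤ μ₁ ∧ 0 ≤ μ₂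

/-- Feasibility for the bilevel problem: `x ≥ 0` and `(y₁, y₂)` minimizes `y₁` over
`{(z₁, z₂) : z₁² − z₂ − x ≤ 0, z₁² + z₂ ≤ 0}`. -/
def BP1Feasible (x y₁ y₂ : ℝ) : Prop :=
  0 ≤ x ∧ (y₁ ^ 2 - y₂ - x ≤ 0 ∧ y₁ ^ 2 + y₂ ≤ 0) ∧
  ∀ z₁ z₂ : ℝ, z₁ ^ 2 - z₂ - x ≤ 0 → z₁ ^ 2 + z₂ ≤ 0 → y₁ ≤ z₁

/-!
At `x = 0` the lower-level feasible set is the single point `(0, 0)`, so no constraint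
qualification holds there and the stationarity equation `1 + 2(μ₁ + μ₂) y₁ = 0` fails at `y₁ = 0`.
For `x > 0` both constraints are active at the lower-level minimizer `y₁ = −√(x/2)`, and
stationarity is solved by `μ₁ = μ₂ = 1 / (4√(x/2))`. So the objective values of the MPCC fill
exactly `(0, ∞)`, whose infimum `0` is not attained, while the bilevel problem is solved at `x = 0`.
-/

theorem not_isLeast_of_isGLB_of_notMem {α : Type*} [PartialOrder α] {s : Set α} {a b : α}
    (ha : IsGLB s a) (has : a ∉ s) : ¬ IsLeast s b :=
  fun hb => has (ha.unique hb.isGLB ▸ hb.1)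

theorem eq_zero_of_lowerLevel_constraints_of_nonpos {x y₁ y₂ : ℝ} (hx : x ≤ 0)
    (h₁ : y₁ ^ 2 - y₂ - x ≤ 0) (h₂ : y₁ ^ 2 + y₂ ≤ 0) : y₁ = 0 ∧ y₂ = 0 := by
  have hy₁ : y₁ = 0 := by nlinarith [sq_nonneg y₁]
  subst hy₁
  constructor <;> linarith

theorem MPCC1Feasible.y₁_ne_zero {x y₁ y₂ μ₁ μ₂ : ℝ} (h : MPCC1Feasible x y₁ y₂ μ₁ μ₂) :
    y₁ ≠ 0 := by
  rintro rfl
  simp [MPCC1Feasible] at h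

theorem not_MPCC1Feasible_zero (y₁ y₂ μ₁ μ₂ : ℝ) : ¬ MPCC1Feasible 0 y₁ y₂ μ₁ μ₂ := fun h =>
  h.y₁_ne_zero (eq_zero_of_lowerLevel_constraints_of_nonpos le_rfl h.2.2.2.2.2.1 h.2.2.2.2.2.2.1).1

theorem exists_MPCC1Feasible_of_pos {x : ℝ} (hx : 0 < x) :
    ∃ y₁ y₂ μ₁ μ₂ : ℝ, MPCC1Feasible x y₁ y₂ μ₁ μ₂ := by
  set s := Real.sqrt (x / 2)
  have hs : 0 < s := Real.sqrt_pos.mpr (half_pos hx)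
  have hs_sq : s ^ 2 = x / 2 := Real.sq_sqrt (half_pos hx).le
  have h₁ : (-s) ^ 2 - -(x / 2) - x = 0 := by rw [neg_sq, hs_sq]; ring
  have h₂ : (-s) ^ 2 + -(x / 2) = 0 := by rw [neg_sq, hs_sq]; ring
  refine ⟨-s, -(x / 2), 1 / (4 * s), 1 / (4 * s), hx.le, ?_, sub_self _, by rw [h₁, mul_zero],
    by rw [h₂, mul_zero], h₁.le, h₂.le, by positivity, by positivity⟩
  field_simp
  ring

def mpcc1ObjectiveValues : Set ℝ := {x | ∃ y₁ y₂ μ₁ μ₂ : ℝ, MPCC1Feasible x y₁ y₂ μ₁ μ₂}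

theorem mpcc1ObjectiveValues_eq_Ioi : mpcc1ObjectiveValues = Set.Ioi 0 := by
  ext x
  refine ⟨fun ⟨y₁, y₂, μ₁, μ₂, h⟩ => ?_, exists_MPCC1Feasible_of_pos⟩
  refine h.1.lt_of_ne ?_
  rintro rfl
  exact not_MPCC1Feasible_zero y₁ y₂ μ₁ μ₂ h

theorem BP1Feasible_zero : BP1Feasible 0 0 0 :=
  ⟨le_rfl, by norm_num, fun z₁ _ h₁ h₂ =>
    (eq_zero_of_lowerLevel_constraints_of_nonpos le_rfl h₁ h₂).1.ge⟩

theorem BP1Feasible.eq_zero_of_nonpos {x y₁ y₂ : ℝ} (h : BP1Feasible x y₁ y₂) (hx : x ≤ 0) :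
    x = 0 ∧ y₁ = 0 ∧ y₂ = 0 :=
  ⟨le_antisymm hx h.1, eq_zero_of_lowerLevel_constraints_of_nonpos hx h.2.1.1 h.2.1.2⟩

/-- The MPCC reformulation can fail to have a solution while the bilevel problem has a unique
one: (i) no feasible point of the MPCC has `x = 0`; (ii) every `x > 0` is attained by a
feasible point; hence the infimum `0` of `x` over the MPCC feasible region is not attained and
the MPCC has no optimal solution, while the bilevel problem has the unique optimal solution
`x = 0`, `y = (0, 0)`. -/
theorem MPCC_no_solution_bilevel_unique :
    (∀ y₁ y₂ μ₁ μ₂ : ℝ, ¬ MPCC1Feasible 0 y₁ y₂ μ₁ μ₂) ∧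
    (∀ x : ℝ, 0 < x → ∃ y₁ y₂ μ₁ μ₂ : ℝ, MPCC1Feasible x y₁ y₂ μ₁ μ₂) ∧
    IsGLB {x : ℝ | ∃ y₁ y₂ μ₁ μ₂ : ℝ, MPCC1Feasible x y₁ y₂ μ₁ μ₂} 0 ∧
    (0 ∉ {x : ℝ | ∃ y₁ y₂ μ₁ μ₂ : ℝ, MPCC1Feasible x y₁ y₂ μ₁ μ₂}) ∧
    ¬ (∃ x y₁ y₂ μ₁ μ₂ : ℝ, MPCC1Feasible x y₁ y₂ μ₁ μ₂ ∧
        ∀ x' y₁' y₂' μ₁' μ₂' : ℝ, MPCC1Feasible x' y₁' y₂' μ₁' μ₂' → x ≤ x') ∧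
    (BP1Feasible 0 0 0 ∧ ∀ x y₁ y₂ : ℝ, BP1Feasible x y₁ y₂ → 0 ≤ x) ∧
    (∀ x y₁ y₂ : ℝ, BP1Feasible x y₁ y₂ →
      (∀ x' y₁' y₂' : ℝ, BP1Feasible x' y₁' y₂' → x ≤ x') →
      x = 0 ∧ y₁ = 0 ∧ y₂ = 0) := by
  have hvalues := mpcc1ObjectiveValues_eq_Ioi
  have hglb : IsGLB mpcc1ObjectiveValues 0 := hvalues ▸ isGLB_Ioi
  have hzero : (0 : ℝ) ∉ mpcc1ObjectiveValues := hvalues ▸ Set.self_notMem_Ioi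
  refine ⟨not_MPCC1Feasible_zero, fun _ => exists_MPCC1Feasible_of_pos, hglb, hzero, ?_,
    ⟨BP1Feasible_zero, fun _ _ _ h => h.1⟩, fun x _ _ h hmin => h.eq_zero_of_nonpos ?_⟩
  · rintro ⟨x, y₁, y₂, μ₁, μ₂, h, hmin⟩
    exact not_isLeast_of_isGLB_of_notMem hglb hzero
      ⟨⟨y₁, y₂, μ₁, μ₂, h⟩, fun x' ⟨y₁', y₂', μ₁', μ₂', h'⟩ => hmin x' y₁' y₂' μ₁' μ₂' h'⟩
  · exact hmin 0 0 0 BP1Feasible_zero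
end
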